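/- For every natural number i, the polynomial d_i := e_i + b_i(f_i − 1) satisfies d_i = (−1)^i + f_0⋯f_{i−1}·(z_i + y) in ℤ[y], where the empty product (for i = 0) is 1. -/

import Mathlib

open Polynomial

/-- The sequence `f` in `ℤ[y]`: `f 0 = y+1`, `f 1 = y²+1`,
`f i = f (i-1) * f (i-2) + (f (i-1) - 1) * (f (i-1) - 2)` for `i ≥ 2`. -/
noncomputable def fP : ℕ → Polynomial ℤ
  | 0 => X + 1
  | 1 => X ^ 2 + 1
  | (i + 2) => fP (i + 1) * fP i + (fP (i + 1) - 1) * (fP (i + 1) - 2)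

/-- The sequence `e` in `ℤ[y]`: `e i = y · f 0 ⋯ f (i-1)`. -/
noncomputable def eP (i : ℕ) : Polynomial ℤ := X * ∏ k ∈ Finset.range i, fP k

/-- The sequence `b` in `ℤ[y]`: `b 0 = 1` and `b i = (-1)^i + f (i-1) * b (i-1)` for `i ≥ 1`. -/
noncomputable def bP : ℕ → Polynomial ℤ
  | 0 => 1
  | (i + 1) => (-1) ^ (i + 1) + fP i * bP i

/-- The sequence `z` in `ℤ[y]`: `z 0 = y - 1`, `z 1 = y² - y + 1`,
`z i = e (i-1) * z (i-1) + z (i-2)` for `i ≥ 2`. -/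
noncomputable def zP : ℕ → Polynomial ℤ
  | 0 => X - 1
  | 1 => X ^ 2 - X + 1
  | (i + 2) => eP (i + 1) * zP (i + 1) + zP i

/-- The sequence `d` in `ℤ[y]`: `d i = e i + b i * (f i - 1)`. -/
noncomputable def dP (i : ℕ) : Polynomial ℤ := eP i + bP i * (fP i - 1)

lemma eP_succ (i : ℕ) : eP (i + 1) = eP i * fP i := by
  unfold eP
  rw [Finset.prod_range_succ, mul_assoc]

lemma fP_eP (i : ℕ) : fP (i + 1) + fP i - 2 = eP i * fP i := by
  induction i with
  | zero =>
      unfold eP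
      simp only [show fP 1 = X ^ 2 + 1 from rfl, show fP 0 = X + 1 from rfl,
        Finset.prod_range_zero]
      ring
  | succ i ih =>
      rw [eP_succ,
        show fP (i + 2) = fP (i + 1) * fP i + (fP (i + 1) - 1) * (fP (i + 1) - 2) from rfl]
      linear_combination fP (i + 1) * ih

lemma bP_fP_zP (i : ℕ) :
    bP i * (fP i - 1) = (-1) ^ i + (∏ k ∈ Finset.range i, fP k) * zP i := by
  induction i using Nat.twoStepInduction with
  | zero =>
      show (1 : Polynomial ℤ) * ((X + 1) - 1) = (-1) ^ 0 + (∏ k ∈ Finset.range 0, fP k) * (X - 1)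
      simp
  | one =>
      show ((-1) ^ (0 + 1) + fP 0 * bP 0) * ((X ^ 2 + 1) - 1)
          = (-1) ^ 1 + (∏ k ∈ Finset.range 1, fP k) * (X ^ 2 - X + 1)
      show ((-1) ^ (0 + 1) + (X + 1) * 1) * ((X ^ 2 + 1) - 1)
          = (-1) ^ 1 + (∏ k ∈ Finset.range 1, fP k) * (X ^ 2 - X + 1)
      rw [Finset.prod_range_one]
      show ((-1) ^ (0 + 1) + (X + 1) * 1) * ((X ^ 2 + 1) - 1)
          = (-1) ^ 1 + (X + 1) * (X ^ 2 - X + 1)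
      ring
  | more i ih1 ih2 =>
      have hD1 := fP_eP (i + 1)
      have hD2 : fP (i + 1) + fP i - 2 = eP (i + 1) := by
        rw [eP_succ]; exact fP_eP i
      have hb : bP (i + 1) = (-1) ^ (i + 1) + fP i * bP i := rfl
      rw [show bP (i + 2) = (-1) ^ (i + 2) + fP (i + 1) * bP (i + 1) from rfl,
        show zP (i + 2) = eP (i + 1) * zP (i + 1) + zP i from rfl,
        Finset.prod_range_succ, Finset.prod_range_succ]
      rw [Finset.prod_range_succ] at ih2
      linear_combination ((-1 : Polynomial ℤ) ^ (i + 2) + fP (i + 1) * bP (i + 1)) * hD1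
        - fP (i + 1) * bP (i + 1) * hD2
        + fP (i + 1) * eP (i + 1) * ih2
        + fP (i + 1) * fP i * ih1
        + fP (i + 1) * (fP i - 1) * hb

/-- The polynomial `d i = e i + b i * (f i − 1)` satisfies
`d i = (−1)^i + f 0 ⋯ f (i-1) · (z i + y)` in `ℤ[y]`. -/
theorem dP_alt_formula (i : ℕ) :
    dP i = (-1) ^ i + (∏ k ∈ Finset.range i, fP k) * (zP i + X) := by
  unfold dP eP
  linear_combination bP_fP_zP i
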